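/- arXiv:2507.02496 — 2 statements merged into one kernel-verified Lean document; each statement's English description precedes it below -/
import Mathlib

section
/- Consider a run of Algorithm 1 on a sequence y_1,...,y_T ∈ [0,1]. Suppose I_current is reset on day t_1 and the next reset occurs on day t_2 (so the same interval I_current is played on all days t_1, t_1+1, ..., t_2 − 1), with t_2 ≥ 2. Then the number of mistakes made on days t_1 through t_2 − 1 is at most 1 + R(t_2 − 2)·(t_2 − 2); in particular, the number of mistakes in any such phase is at most 1 + max_{0 ≤ t ≤ T−1} R(t)·t. -/
open MeasureTheory
open scoped Classical ENNReal

noncomputable section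

/-- The number of points among `y 1, …, y n` lying in the closed interval
with endpoints `J.1 ≤ J.2`. -/
def covCount (y : ℕ → ℝ) (J : ℝ × ℝ) (n : ℕ) : ℕ :=
  ((Finset.Icc 1 n).filter (fun s => y s ∈ Set.Icc J.1 J.2)).card

/-- The empirical coverage fraction of the interval `J` over the points `y 1, …, y n`
(by convention, the empty prefix is fully covered). -/
def covFrac (y : ℕ → ℝ) (J : ℝ × ℝ) (n : ℕ) : ℝ :=
  if n = 0 then 1 else (covCount y J n : ℝ) / (n : ℝ)

/-- The length (volume) of the interval with endpoint pair `J`. -/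
def vol (J : ℝ × ℝ) : ℝ := J.2 - J.1

/-- The interval with the same midpoint as `J` and width `w`.
(`expandTo (μ * max (vol J) minwidth) J` is exactly the interval `μ̂·J` of Algorithm 1,
where `μ̂ = μ·max{1, minwidth/vol(J)}`.) -/
def expandTo (w : ℝ) (J : ℝ × ℝ) : ℝ × ℝ :=
  ((J.1 + J.2) / 2 - w / 2, (J.1 + J.2) / 2 + w / 2)

/-- A run of Algorithm 1 (the meta-algorithm for online conformal prediction) with
scale lower bound `minwidth`, volume approximation `μ`, horizon `T`, allowable error
rate function `R`, on the input sequence `y 1, …, y T`.  `cur t` is the state of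
`I_current` after the (possible) reset of day `t`, i.e. the interval played on day `t`;
`cur 0 = (0,0)` is the initial degenerate interval.  On each day `t`, if the current
interval has empirical coverage `< 1 - R (t-1)` on the previously seen points, the
algorithm picks an arbitrary minimum-volume interval `J` with empirical coverage
`≥ 1 - R (t-1)` and resets `I_current` to `μ̂·J`; otherwise it keeps the interval. -/
structure AlgoRun (minwidth μ : ℝ) (T : ℕ) (R : ℕ → ℝ) (y : ℕ → ℝ) where
  cur : ℕ → ℝ × ℝ
  init : cur 0 = (0, 0)
  step_reset : ∀ t, 1 ≤ t → t ≤ T → covFrac y (cur (t - 1)) (t - 1) < 1 - R (t - 1) →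
    ∃ J : ℝ × ℝ, J.1 ≤ J.2 ∧ 1 - R (t - 1) ≤ covFrac y J (t - 1) ∧
      (∀ J' : ℝ × ℝ, J'.1 ≤ J'.2 → 1 - R (t - 1) ≤ covFrac y J' (t - 1) → vol J ≤ vol J') ∧
      cur t = expandTo (μ * max (vol J) minwidth) J
  step_keep : ∀ t, 1 ≤ t → t ≤ T → ¬ covFrac y (cur (t - 1)) (t - 1) < 1 - R (t - 1) →
    cur t = cur (t - 1)

/-- The set played by Algorithm 1 on day `t`, namely `I_current ∩ [0,1]`. -/
def AlgoRun.play {minwidth μ : ℝ} {T : ℕ} {R y : ℕ → ℝ}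
    (A : AlgoRun minwidth μ T R y) (t : ℕ) : Set ℝ :=
  Set.Icc (A.cur t).1 (A.cur t).2 ∩ Set.Icc 0 1

/-- The volume (length) of the interval played on day `t`. -/
def AlgoRun.playVol {minwidth μ : ℝ} {T : ℕ} {R y : ℕ → ℝ}
    (A : AlgoRun minwidth μ T R y) (t : ℕ) : ℝ :=
  (volume (A.play t)).toReal

/-- The total number of mistakes of the run: days `t ∈ {1,…,T}` with `y t` not covered. -/
def AlgoRun.mistakes {minwidth μ : ℝ} {T : ℕ} {R y : ℕ → ℝ}
    (A : AlgoRun minwidth μ T R y) : ℕ :=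
  ((Finset.Icc 1 T).filter (fun t => y t ∉ A.play t)).card

/-- `Opt_S(a)`: the minimum length of a closed interval `[p,q] ⊆ [0,1]` containing at
least `(1-a)·T` of the points `y 1, …, y T`. -/
def OptS (T : ℕ) (y : ℕ → ℝ) (a : ℝ) : ℝ :=
  sInf {v : ℝ | ∃ p q : ℝ, 0 ≤ p ∧ p ≤ q ∧ q ≤ 1 ∧ v = q - p ∧
    (1 - a) * T ≤ (((Finset.Icc 1 T).filter (fun s => y s ∈ Set.Icc p q)).card : ℝ)}

/-- **Mistakes per phase** (inequality (7) in the proof of Theorem 2.1).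
Consider a run of Algorithm 1 on a sequence `y 1, …, y T ∈ [0,1]`.  Suppose `I_current`
is reset on day `t₁` and the next reset occurs on day `t₂ ≥ 2` (so the same interval is
played on days `t₁, …, t₂ - 1`).  Then the number of mistakes made on days `t₁` through
`t₂ - 1` is at most `1 + R(t₂-2)·(t₂-2)`; in particular it is at most
`1 + max_{0 ≤ t ≤ T-1} R t · t`. -/
theorem stmt5 (minwidth μ : ℝ) (T : ℕ) (R : ℕ → ℝ) (y : ℕ → ℝ)
    (A : AlgoRun minwidth μ T R y)
    (hminwidth : 0 < minwidth) (hμ : 1 ≤ μ)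
    (hR : ∀ t, t ≤ T - 1 → R t ∈ Set.Icc (0:ℝ) 1)
    (hy : ∀ t, 1 ≤ t → t ≤ T → y t ∈ Set.Icc (0:ℝ) 1)
    (t₁ t₂ : ℕ) (ht₁ : 1 ≤ t₁) (h₁₂ : t₁ < t₂) (ht₂ : t₂ ≤ T) (h2 : 2 ≤ t₂)
    (hreset₁ : covFrac y (A.cur (t₁ - 1)) (t₁ - 1) < 1 - R (t₁ - 1))
    (hreset₂ : covFrac y (A.cur (t₂ - 1)) (t₂ - 1) < 1 - R (t₂ - 1))
    (hbetween : ∀ t, t₁ < t → t < t₂ →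
      ¬ covFrac y (A.cur (t - 1)) (t - 1) < 1 - R (t - 1)) :
    ((((Finset.Icc t₁ (t₂ - 1)).filter (fun t => y t ∉ A.play t)).card : ℝ)
        ≤ 1 + R (t₂ - 2) * ((t₂ : ℝ) - 2)) ∧
      ((((Finset.Icc t₁ (t₂ - 1)).filter (fun t => y t ∉ A.play t)).card : ℝ)
        ≤ 1 + sSup ((fun t' : ℕ => R t' * (t' : ℝ)) '' {t' : ℕ | t' ≤ T - 1})) := by
  set I := A.cur t₁ with hI
  -- the current interval stays constant throughout the phase
  have hconst : ∀ k, t₁ + k ≤ t₂ - 1 → A.cur (t₁ + k) = I := by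
    intro k
    induction k with
    | zero => intro _; rfl
    | succ k ih =>
      intro h
      have hb := hbetween (t₁ + k + 1) (by omega) (by omega)
      have hk := A.step_keep (t₁ + k + 1) (by omega) (by omega)
      simp only [Nat.add_sub_cancel] at hb hk
      have h1 : A.cur (t₁ + (k + 1)) = A.cur (t₁ + k) := hk hb
      rw [h1]; exact ih (by omega)
  have hcur : ∀ t, t₁ ≤ t → t ≤ t₂ - 1 → A.cur t = I := by
    intro t h1 h2
    have := hconst (t - t₁) (by omega)
    rwa [Nat.add_sub_cancel' h1] at this
  have hmem : ∀ t, t₁ ≤ t → t ≤ t₂ - 1 → y t ∉ A.play t → y t ∉ Set.Icc I.1 I.2 := by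
    intro t h1 h2 hm hin
    exact hm (by
      rw [AlgoRun.play, hcur t h1 h2]
      exact ⟨hin, hy t (by omega) (by omega)⟩)
  have hT2 : t₂ - 2 ≤ T - 1 := by omega
  have hR0 : 0 ≤ R (t₂ - 2) := (hR _ hT2).1
  have ht₂R : (2 : ℝ) ≤ (t₂ : ℝ) := by exact_mod_cast h2
  have hcast : ((t₂ - 2 : ℕ) : ℝ) = (t₂ : ℝ) - 2 := by
    have := Nat.cast_sub h2 (R := ℝ); push_cast at this ⊢; linarith
  -- main bound
  have main : (((Finset.Icc t₁ (t₂ - 1)).filter (fun t => y t ∉ A.play t)).card : ℝ)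
      ≤ 1 + R (t₂ - 2) * ((t₂ : ℝ) - 2) := by
    by_cases hcase : t₂ = t₁ + 1
    · have hcard : ((Finset.Icc t₁ (t₂ - 1)).filter (fun t => y t ∉ A.play t)).card ≤ 1 := by
        calc ((Finset.Icc t₁ (t₂ - 1)).filter (fun t => y t ∉ A.play t)).card
            ≤ (Finset.Icc t₁ (t₂ - 1)).card := Finset.card_filter_le _ _
          _ = 1 := by rw [Nat.card_Icc]; omega
      have : (((Finset.Icc t₁ (t₂ - 1)).filter (fun t => y t ∉ A.play t)).card : ℝ) ≤ 1 := by
        exact_mod_cast hcard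
      nlinarith
    · -- the phase has length ≥ 2; use the keep condition on day t₂ - 1
      set n := t₂ - 2 with hn
      have hn1 : 1 ≤ n := by omega
      have hkeep := hbetween (t₂ - 1) (by omega) (by omega)
      have he : t₂ - 1 - 1 = n := by omega
      rw [he, hcur n (by omega) (by omega)] at hkeep
      push_neg at hkeep
      have hnR : (0 : ℝ) < (n : ℝ) := by exact_mod_cast hn1
      rw [covFrac, if_neg (by omega)] at hkeep
      have hcov : ((n : ℝ)) - (covCount y I n : ℝ) ≤ R n * (n : ℝ) := by
        have h1 : (1 - R n) * (n : ℝ) ≤ (covCount y I n : ℝ) := (le_div_iff₀ hnR).mp hkeep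
        nlinarith
      -- counting
      have hsub : ((Finset.Icc t₁ n).filter (fun t => y t ∉ A.play t)) ⊆
          (Finset.Icc 1 n).filter (fun s => y s ∉ Set.Icc I.1 I.2) := by
        intro t ht
        simp only [Finset.mem_filter, Finset.mem_Icc] at ht ⊢
        exact ⟨⟨by omega, ht.1.2⟩, hmem t ht.1.1 (by omega) ht.2⟩
      have houtside : ((Finset.Icc 1 n).filter (fun s => y s ∉ Set.Icc I.1 I.2)).card
          = n - covCount y I n := by
        have h1 := Finset.card_filter_add_card_filter_not
          (s := Finset.Icc 1 n) (p := fun s => y s ∈ Set.Icc I.1 I.2)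
        have h2' : (Finset.Icc 1 n).card = n := by rw [Nat.card_Icc]; omega
        rw [h2'] at h1
        unfold covCount
        omega
      have hsplit : ((Finset.Icc t₁ (t₂ - 1)).filter (fun t => y t ∉ A.play t)).card
          ≤ ((Finset.Icc t₁ n).filter (fun t => y t ∉ A.play t)).card + 1 := by
        have hsubset : Finset.Icc t₁ (t₂ - 1) ⊆ Finset.Icc t₁ n ∪ {t₂ - 1} := by
          intro x hx
          simp only [Finset.mem_Icc, Finset.mem_union, Finset.mem_singleton] at hx ⊢
          omega
        calc ((Finset.Icc t₁ (t₂ - 1)).filter (fun t => y t ∉ A.play t)).card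
            ≤ ((Finset.Icc t₁ n ∪ {t₂ - 1}).filter (fun t => y t ∉ A.play t)).card :=
              Finset.card_le_card (Finset.filter_subset_filter _ hsubset)
          _ = (((Finset.Icc t₁ n).filter (fun t => y t ∉ A.play t)) ∪
                (({t₂ - 1} : Finset ℕ).filter (fun t => y t ∉ A.play t))).card := by
              rw [Finset.filter_union]
          _ ≤ ((Finset.Icc t₁ n).filter (fun t => y t ∉ A.play t)).card +
                (({t₂ - 1} : Finset ℕ).filter (fun t => y t ∉ A.play t)).card :=
              Finset.card_union_le _ _
          _ ≤ _ := by
              gcongr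
              calc (({t₂ - 1} : Finset ℕ).filter (fun t => y t ∉ A.play t)).card
                  ≤ ({t₂ - 1} : Finset ℕ).card := Finset.card_filter_le _ _
                _ = 1 := Finset.card_singleton _
      have hcc : covCount y I n ≤ n := by
        calc covCount y I n ≤ (Finset.Icc 1 n).card := Finset.card_filter_le _ _
          _ = n := by rw [Nat.card_Icc]; omega
      have hnat : ((Finset.Icc t₁ (t₂ - 1)).filter (fun t => y t ∉ A.play t)).card
          ≤ (n - covCount y I n) + 1 := by
        have := Finset.card_le_card hsub
        omega
      have hnatR : (((Finset.Icc t₁ (t₂ - 1)).filter (fun t => y t ∉ A.play t)).card : ℝ)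
          ≤ ((n : ℝ) - (covCount y I n : ℝ)) + 1 := by
        have h1 : (((Finset.Icc t₁ (t₂ - 1)).filter (fun t => y t ∉ A.play t)).card : ℝ)
            ≤ (((n - covCount y I n) + 1 : ℕ) : ℝ) := by exact_mod_cast hnat
        rw [Nat.cast_add, Nat.cast_sub hcc] at h1
        exact_mod_cast h1
      have hncast : (n : ℝ) = (t₂ : ℝ) - 2 := by rw [hn]; exact hcast
      rw [hncast] at hcov hnatR
      linarith
  refine ⟨main, main.trans ?_⟩
  have hfin : ({t' : ℕ | t' ≤ T - 1}).Finite := Set.finite_Iic (T - 1)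
  have hbdd : BddAbove ((fun t' : ℕ => R t' * (t' : ℝ)) '' {t' : ℕ | t' ≤ T - 1}) :=
    (hfin.image _).bddAbove
  have hmemS : R (t₂ - 2) * ((t₂ - 2 : ℕ) : ℝ)
      ∈ (fun t' : ℕ => R t' * (t' : ℝ)) '' {t' : ℕ | t' ≤ T - 1} :=
    ⟨t₂ - 2, hT2, rfl⟩
  have := le_csSup hbdd hmemS
  rw [hcast] at this
  linarith
end
end

section
/- Let 0 < ε ≤ 1/2, α ∈ (0,1], and let K be a nonnegative real with K ≤ ln(1/α). Let D be the probability distribution on [0,1] with cumulative distribution function F given by F(x) = 0 for 0 ≤ x < ε^{K+1}, F(x) = 1 − (α/e)·x^{1/ln ε} for ε^{K+1} ≤ x ≤ ε, and F(x) = 1 − α(1−x)/(1−ε) for ε ≤ x ≤ 1 (so D has a point mass of 1 − αe^K at ε^{K+1}). Then for every coverage level c ∈ [0,1]: (i) the minimum volume of a closed interval I ⊆ [0,1] with D(I) ≥ c equals v*(c) = F^{-1}(c) − ε^{K+1}, where F^{-1}(0) := ε^{K+1}; (ii) v* is convex on [0,1]; and (iii) for any random closed interval 𝐈 ⊆ [0,1]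 with E[D(𝐈)] ≥ c, one has E[vol(𝐈)] ≥ F^{-1}(c) − ε^{K+1}. -/
/-!
On its support `[m, 1]`, `m = ε ^ (K + 1)`, the c.d.f. `F` is concave: the power piece is concave
because `x ↦ x ^ r` is convex for `r ≤ 0`, and it joins the affine piece concavely at `ε`.
Only this concavity is used afterwards. An interval `[p, q]` with `m < p` has mass at most
`F q - F p ≤ F (m + q - p) - F m`, so sliding it left until it starts at `m` loses no mass; hence
`[m, F⁻¹ c]` is a shortest interval of mass `c`. Concavity of `F` makes `F⁻¹` convex, and `v*` is
minimal at `0`, so it has a supporting line of nonnegative slope at every interior `c`; integrating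
`v* (D 𝐈) ≤ vol 𝐈` against it gives `E[vol 𝐈] ≥ v* (E[D 𝐈]) ≥ v* c`.
-/

open MeasureTheory
open scoped ENNReal

noncomputable section

def Fcdf (ε α K : ℝ) (x : ℝ) : ℝ :=
  if x < ε ^ (K + 1) then 0
  else if x ≤ ε then 1 - (α / Real.exp 1) * x ^ (1 / Real.log ε)
  else if x ≤ 1 then 1 - α * (1 - x) / (1 - ε)
  else 1

def Finv (ε α K : ℝ) (c : ℝ) : ℝ :=
  if c ≤ 0 then ε ^ (K + 1) else sInf {x : ℝ | c ≤ Fcdf ε α K x}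

open Set

theorem ConcaveOn.add_le_add_of_mem_Icc {s : Set ℝ} {f : ℝ → ℝ} {a b x : ℝ}
    (hf : ConcaveOn ℝ s f) (ha : a ∈ s) (hb : b ∈ s) (hx : x ∈ Icc a b) :
    f a + f b ≤ f x + f (a + b - x) := by
  rcases (hx.1.trans hx.2).eq_or_lt with rfl | hab
  · obtain rfl : x = a := le_antisymm hx.2 hx.1
    simp
  set t := (b - x) / (b - a)
  have ht0 : 0 ≤ t := div_nonneg (sub_nonneg.2 hx.2) (sub_nonneg.2 hab.le)
  have ht1 : 0 ≤ 1 - t := by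
    rw [sub_nonneg, div_le_one (sub_pos.2 hab)]; linarith [hx.1]
  have hx' : t • a + (1 - t) • b = x := by
    simp only [t, smul_eq_mul]; field_simp; ring
  have hy' : (1 - t) • a + t • b = a + b - x := by
    simp only [t, smul_eq_mul]; field_simp; ring
  have h₁ := hf.2 ha hb ht0 ht1 (by ring)
  have h₂ := hf.2 ha hb ht1 ht0 (by ring)
  rw [hx'] at h₁
  rw [hy'] at h₂
  simp only [smul_eq_mul] at h₁ h₂
  linarith

theorem ConcaveOn.union_Icc {f : ℝ → ℝ} {a e b : ℝ} (hl : ConcaveOn ℝ (Icc a e) f)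
    (hr : ConcaveOn ℝ (Icc e b) f)
    (hglue : ∀ x ∈ Ico a e, ∀ y ∈ Ioc e b, (f y - f e) / (y - e) ≤ (f e - f x) / (e - x)) :
    ConcaveOn ℝ (Icc a b) f := by
  refine concaveOn_of_slope_anti_adjacent (convex_Icc a b) fun {x y z} hx hz hxy hyz => ?_
  rcases le_or_gt z e with hze | hez
  · exact hl.slope_anti_adjacent ⟨hx.1, (hxy.trans hyz).le.trans hze⟩
      ⟨hx.1.trans (hxy.trans hyz).le, hze⟩ hxy hyz
  rcases le_or_gt e x with hex | hxe
  · exact hr.slope_anti_adjacent ⟨hex, (hxy.trans hyz).le.trans hz.2⟩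
      ⟨hex.trans (hxy.trans hyz).le, hz.2⟩ hxy hyz
  rcases lt_trichotomy y e with hye | rfl | hey
  · -- both chords `[y, e]` and `[e, z]` are at most as steep as `[x, y]`
    set R := (f e - f y) / (e - y)
    have hR : R ≤ (f y - f x) / (y - x) :=
      hl.slope_anti_adjacent ⟨hx.1, hxe.le⟩ ⟨hx.1.trans hxe.le, le_rfl⟩ hxy hye
    have hzR : f z - f e ≤ R * (z - e) :=
      (div_le_iff₀ (sub_pos.2 hez)).1 (hglue y ⟨hx.1.trans hxy.le, hye⟩ z ⟨hez, hz.2⟩)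
    have hyR : f e - f y = R * (e - y) := (div_mul_cancel₀ _ (sub_pos.2 hye).ne').symm
    refine le_trans ?_ hR
    rw [div_le_iff₀ (sub_pos.2 hyz)]
    linarith
  · exact hglue x ⟨hx.1, hxe⟩ z ⟨hez, hz.2⟩
  · set R := (f y - f e) / (y - e)
    have hR : (f z - f y) / (z - y) ≤ R :=
      hr.slope_anti_adjacent ⟨le_rfl, hez.le.trans hz.2⟩ ⟨hey.le.trans hyz.le, hz.2⟩ hey hyz
    have hxR : R * (e - x) ≤ f e - f x :=
      (le_div_iff₀ (sub_pos.2 hxe)).1 (hglue x ⟨hx.1, hxe⟩ y ⟨hey, hyz.le.trans hz.2⟩)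
    have hyR : f y - f e = R * (y - e) := (div_mul_cancel₀ _ (sub_pos.2 hey).ne').symm
    refine hR.trans ?_
    rw [le_div_iff₀ (sub_pos.2 hxy)]
    linarith

theorem ConvexOn.add_rightDeriv_mul_sub_le {S : Set ℝ} {g : ℝ → ℝ} {c u : ℝ}
    (hg : ConvexOn ℝ S g) (hc : c ∈ interior S) (hu : u ∈ S) :
    g c + derivWithin g (Ioi c) c * (u - c) ≤ g u := by
  rcases lt_trichotomy u c with huc | rfl | hcu
  · have h := (hg.slope_le_leftDeriv_of_mem_interior hu hc huc).trans
      (hg.leftDeriv_le_rightDeriv_of_mem_interior hc)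
    rw [slope_def_field, div_le_iff₀ (sub_pos.2 huc)] at h
    linarith
  · simp
  · have h := hg.rightDeriv_le_slope_of_mem_interior hc hu hcu
    rw [slope_def_field, le_div_iff₀ (sub_pos.2 hcu)] at h
    linarith

theorem ConvexOn.le_integral_of_comp_le {Ω : Type*} [MeasurableSpace Ω] {P : Measure Ω}
    [IsProbabilityMeasure P] {g : ℝ → ℝ} {a b c : ℝ} {X Y : Ω → ℝ}
    (hg : ConvexOn ℝ (Icc a b) g) (hmin : IsMinOn g (Icc a b) a)
    (hX : Integrable X P) (hY : Integrable Y P) (hXab : ∀ ω, X ω ∈ Icc a b)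
    (hgXY : ∀ ω, g (X ω) ≤ Y ω) (hc : c ∈ Icc a b) (hcX : c ≤ ∫ ω, X ω ∂P) :
    g c ≤ ∫ ω, Y ω ∂P := by
  rcases hc.1.eq_or_lt with rfl | hac
  · calc g a = ∫ _, g a ∂P := by simp
      _ ≤ ∫ ω, Y ω ∂P :=
        integral_mono (integrable_const _) hY fun ω => (hmin (hXab ω)).trans (hgXY ω)
  rcases hc.2.eq_or_lt with hcb | hcb
  · subst hcb
    have hXc : X =ᵐ[P] fun _ => c := by
      refine (integral_eq_iff_of_ae_le hX (integrable_const c)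
        (ae_of_all _ fun ω => (hXab ω).2)).1 ?_
      refine le_antisymm ?_ (by simpa using hcX)
      simpa using integral_mono hX (integrable_const c) fun ω => (hXab ω).2
    calc g c = ∫ _, g c ∂P := by simp
      _ ≤ ∫ ω, Y ω ∂P := integral_mono_ae (integrable_const _) hY <| by
          filter_upwards [hXc] with ω hω
          simpa [hω] using hgXY ω
  have hint : c ∈ interior (Icc a b) := by rw [interior_Icc]; exact ⟨hac, hcb⟩
  set s := derivWithin g (Ioi c) c
  have hsupp : ∀ u ∈ Icc a b, g c + s * (u - c) ≤ g u := fun u hu =>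
    hg.add_rightDeriv_mul_sub_le hint hu
  have hs : 0 ≤ s := by
    have h₁ := hsupp a ⟨le_rfl, hac.le.trans hcb.le⟩
    have h₂ : g a ≤ g c := isMinOn_iff.1 hmin c hc
    nlinarith
  have hline : Integrable (fun ω => s * (X ω - c)) P := (hX.sub (integrable_const c)).const_mul s
  calc g c ≤ g c + s * (∫ ω, X ω ∂P - c) :=
        le_add_of_nonneg_right (mul_nonneg hs (sub_nonneg.2 hcX))
    _ = ∫ ω, (g c + s * (X ω - c)) ∂P := by
        rw [integral_add (integrable_const _) hline,
          integral_const_mul, integral_sub hX (integrable_const c)]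
        simp
    _ ≤ ∫ ω, Y ω ∂P := integral_mono ((integrable_const _).add hline) hY fun ω =>
        (hsupp _ (hXab ω)).trans (hgXY ω)

theorem convexOn_rpow_of_nonpos {r : ℝ} (hr : r ≤ 0) :
    ConvexOn ℝ (Ioi 0) fun x : ℝ => x ^ r := by
  refine ⟨convex_Ioi 0, fun x (hx : 0 < x) y (hy : 0 < y) a b ha hb hab => ?_⟩
  simp only [smul_eq_mul]
  calc (a * x + b * y) ^ r ≤ (x ^ a * y ^ b) ^ r :=
        Real.rpow_le_rpow_of_nonpos (by positivity)
          (Real.geom_mean_le_arith_mean2_weighted ha hb hx.le hy.le hab) hr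
    _ = (x ^ r) ^ a * (y ^ r) ^ b := by
        rw [Real.mul_rpow (by positivity) (by positivity), ← Real.rpow_mul hx.le,
          ← Real.rpow_mul hx.le, ← Real.rpow_mul hy.le, ← Real.rpow_mul hy.le, mul_comm a,
          mul_comm b]
    _ ≤ a * x ^ r + b * y ^ r :=
        Real.geom_mean_le_arith_mean2_weighted ha hb (by positivity) (by positivity) hab

theorem Real.rpow_one_div_log {x : ℝ} (hx : 0 < x) (hx1 : x ≠ 1) :
    x ^ (1 / Real.log x) = Real.exp 1 := by
  rw [one_div, Real.rpow_inv_log hx hx1]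

theorem Real.rpow_add_one_le_self {x y : ℝ} (hx : 0 < x) (hx1 : x ≤ 1) (hy : 0 ≤ y) :
    x ^ (y + 1) ≤ x :=
  (Real.rpow_le_rpow_of_exponent_ge hx hx1 (by linarith)).trans_eq (Real.rpow_one x)

structure ConcaveCDFOn (F : ℝ → ℝ) (m : ℝ) : Prop where
  eq_zero_of_lt : ∀ x < m, F x = 0
  nonneg_left : 0 ≤ F m
  one_le : 1 ≤ F 1
  continuousOn : ContinuousOn F (Icc m 1)
  concaveOn : ConcaveOn ℝ (Icc m 1) F

def quantile (F : ℝ → ℝ) (m c : ℝ) : ℝ :=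
  if c ≤ 0 then m else sInf {x | c ≤ F x}

namespace ConcaveCDFOn

variable {F : ℝ → ℝ} {m c : ℝ}

theorem le_one (hF : ConcaveCDFOn F m) : m ≤ 1 := by
  by_contra! h
  have := hF.one_le
  rw [hF.eq_zero_of_lt 1 h] at this
  norm_num at this

theorem nonneg_of_mem_Icc (hF : ConcaveCDFOn F m) {x : ℝ} (hx : x ∈ Icc m 1) : 0 ≤ F x :=
  (le_min hF.nonneg_left (zero_le_one.trans hF.one_le)).trans
    (hF.concaveOn.min_le_of_mem_Icc ⟨le_rfl, hF.le_one⟩ ⟨hF.le_one, le_rfl⟩ hx)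

theorem isLeast_quantile (hF : ConcaveCDFOn F m) (hc : c ≤ 1) :
    IsLeast {x | m ≤ x ∧ c ≤ F x} (quantile F m c) := by
  unfold quantile
  split_ifs with hc0
  · exact ⟨⟨le_rfl, hc0.trans hF.nonneg_left⟩, fun x hx => hx.1⟩
  have hS : {x | c ≤ F x} = {x | m ≤ x ∧ c ≤ F x} := by
    ext x
    refine ⟨fun hx => ⟨not_lt.1 fun hxm => ?_, hx⟩, And.right⟩
    rw [Set.mem_ofPred_eq, hF.eq_zero_of_lt x hxm] at hx
    exact hc0 hx
  have hT : IsLeast (Icc m 1 ∩ F ⁻¹' Ici c) (sInf (Icc m 1 ∩ F ⁻¹' Ici c)) :=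
    (hF.continuousOn.preimage_isClosed_of_isClosed isClosed_Icc isClosed_Ici).isLeast_csInf
      ⟨1, ⟨hF.le_one, le_rfl⟩, hc.trans hF.one_le⟩ ⟨m, fun x hx => hx.1.1⟩
  have hST : IsLeast {x | m ≤ x ∧ c ≤ F x} (sInf (Icc m 1 ∩ F ⁻¹' Ici c)) := by
    refine ⟨⟨hT.1.1.1, hT.1.2⟩, fun x hx => ?_⟩
    rcases le_or_gt x 1 with hx1 | hx1
    · exact hT.2 ⟨⟨hx.1, hx1⟩, hx.2⟩
    · exact (hT.1.1.2).trans hx1.le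
  rw [hS, hST.csInf_eq]
  exact hST

theorem quantile_le_one (hF : ConcaveCDFOn F m) (hc : c ≤ 1) : quantile F m c ≤ 1 :=
  (hF.isLeast_quantile hc).2 ⟨hF.le_one, hc.trans hF.one_le⟩

theorem convexOn_quantile (hF : ConcaveCDFOn F m) : ConvexOn ℝ (Iic 1) (quantile F m) := by
  refine ⟨convex_Iic 1, fun c₁ hc₁ c₂ hc₂ a b ha hb hab => ?_⟩
  obtain ⟨⟨hm₁, hF₁⟩, -⟩ := hF.isLeast_quantile hc₁
  obtain ⟨⟨hm₂, hF₂⟩, -⟩ := hF.isLeast_quantile hc₂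
  have hx₁ : quantile F m c₁ ∈ Icc m 1 := ⟨hm₁, hF.quantile_le_one hc₁⟩
  have hx₂ : quantile F m c₂ ∈ Icc m 1 := ⟨hm₂, hF.quantile_le_one hc₂⟩
  refine (hF.isLeast_quantile (convex_Iic 1 hc₁ hc₂ ha hb hab)).2
    ⟨((convex_Icc m 1) hx₁ hx₂ ha hb hab).1, ?_⟩
  refine le_trans ?_ (hF.concaveOn.2 hx₁ hx₂ ha hb hab)
  simp only [smul_eq_mul]
  gcongr

theorem quantile_le_add_sub (hF : ConcaveCDFOn F m) (hc : c ≤ 1) {p q : ℝ} (hp : m ≤ p)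
    (hpq : p ≤ q) (hq : q ≤ 1) (h : c + F p ≤ F q) : quantile F m c ≤ m + q - p := by
  have hmq : m ∈ Icc m 1 := ⟨le_rfl, hF.le_one⟩
  have key := hF.concaveOn.add_le_add_of_mem_Icc hmq ⟨hp.trans hpq, hq⟩ ⟨hp, hpq⟩
  refine (hF.isLeast_quantile hc).2 ⟨by linarith, ?_⟩
  linarith [hF.nonneg_left]

variable {μ : Measure ℝ}

theorem measure_Iio_eq_zero (hF : ConcaveCDFOn F m)
    (hμ : ∀ x, μ (Iic x) = ENNReal.ofReal (F x)) : μ (Iio m) = 0 := by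
  have hlt : ∀ n : ℕ, m - 1 / (n + 1) < m := fun n => sub_lt_self m Nat.one_div_pos_of_nat
  have hlim : Filter.Tendsto (fun n : ℕ => m - 1 / (n + 1)) Filter.atTop (nhds m) := by
    simpa using (tendsto_const_nhds (x := m)).sub tendsto_one_div_add_atTop_nhds_zero_nat
  rw [← iUnion_Iic_eq_Iio_of_lt_of_tendsto hlt hlim]
  exact measure_iUnion_null fun n => by
    rw [hμ, hF.eq_zero_of_lt _ (hlt n), ENNReal.ofReal_zero]

theorem le_measure_Icc_quantile (hF : ConcaveCDFOn F m)
    (hμ : ∀ x, μ (Iic x) = ENNReal.ofReal (F x)) (hc : c ≤ 1) :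
    ENNReal.ofReal c ≤ μ (Icc m (quantile F m c)) := by
  have hIcc : Iic (quantile F m c) \ Iio m = Icc m (quantile F m c) := by
    ext x
    simp
  rw [← hIcc, measure_sdiff_null (hF.measure_Iio_eq_zero hμ), hμ]
  exact ENNReal.ofReal_le_ofReal (hF.isLeast_quantile hc).1.2

theorem quantile_sub_le_of_le_measure_Icc (hF : ConcaveCDFOn F m)
    (hμ : ∀ x, μ (Iic x) = ENNReal.ofReal (F x)) (hc : c ≤ 1) {p q : ℝ} (hpq : p ≤ q)
    (hq : q ≤ 1) (h : ENNReal.ofReal c ≤ μ (Icc p q)) : quantile F m c - m ≤ q - p := by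
  rcases le_or_gt c 0 with hc0 | hc0
  · rw [quantile, if_pos hc0]
    linarith
  have hcq : c ≤ F q := by
    have := h.trans ((measure_mono Icc_subset_Iic_self).trans (hμ q).le)
    exact (ENNReal.ofReal_le_ofReal_iff'.1 this).resolve_right hc0.not_ge
  have hmq : m ≤ q := not_lt.1 fun hqm => by linarith [hF.eq_zero_of_lt q hqm]
  have hQq : quantile F m c ≤ q := (hF.isLeast_quantile hc).2 ⟨hmq, hcq⟩
  -- `μ (Icc p q)` is bounded by `F q - F p'` only for `p' < p`, so let `p'` increase to `p`
  suffices ∀ p' < p, p' ≤ m + q - quantile F m c by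
    linarith [le_of_forall_lt_imp_le_of_dense this]
  intro p' hp'
  rcases lt_or_ge p' m with hp'm | hmp'
  · linarith
  have hFp' := hF.nonneg_of_mem_Icc ⟨hmp', hp'.le.trans (hpq.trans hq)⟩
  have hdisj : Disjoint (Iic p') (Icc p q) :=
    Set.disjoint_left.2 fun x hx hx' => (hx.trans_lt hp').not_ge hx'.1
  have hsum : ENNReal.ofReal (c + F p') ≤ ENNReal.ofReal (F q) :=
    calc ENNReal.ofReal (c + F p') = μ (Iic p') + ENNReal.ofReal c := by
          rw [ENNReal.ofReal_add hc0.le hFp', hμ, add_comm]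
      _ ≤ μ (Iic p') + μ (Icc p q) := by gcongr
      _ = μ (Iic p' ∪ Icc p q) := (measure_union hdisj measurableSet_Icc).symm
      _ ≤ μ (Iic q) :=
          measure_mono (union_subset (Iic_subset_Iic.2 (hp'.le.trans hpq)) Icc_subset_Iic_self)
      _ = ENNReal.ofReal (F q) := hμ q
  have := hF.quantile_le_add_sub hc hmp' (hp'.le.trans hpq) hq
    ((ENNReal.ofReal_le_ofReal_iff (hc0.le.trans hcq)).1 hsum)
  linarith

theorem isLeast_length (hF : ConcaveCDFOn F m) (hμ : ∀ x, μ (Iic x) = ENNReal.ofReal (F x))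
    (hm : 0 ≤ m) (hc : c ≤ 1) :
    IsLeast
      {v | ∃ p q : ℝ, 0 ≤ p ∧ p ≤ q ∧ q ≤ 1 ∧ v = q - p ∧ ENNReal.ofReal c ≤ μ (Icc p q)}
      (quantile F m c - m) :=
  ⟨⟨m, quantile F m c, hm, (hF.isLeast_quantile hc).1.1, hF.quantile_le_one hc, rfl,
      hF.le_measure_Icc_quantile hμ hc⟩,
    fun _ ⟨_, _, _, hpq, hq, hv, h⟩ => hv ▸ hF.quantile_sub_le_of_le_measure_Icc hμ hc hpq hq h⟩

end ConcaveCDFOn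

section Fcdf

variable {ε α K x : ℝ}

open Real

theorem Finv_eq_quantile : Finv ε α K = quantile (Fcdf ε α K) (ε ^ (K + 1)) := rfl

theorem Fcdf_of_lt (hx : x < ε ^ (K + 1)) : Fcdf ε α K x = 0 := if_pos hx

theorem Fcdf_eq_rpow (hx : x ∈ Icc (ε ^ (K + 1)) ε) :
    Fcdf ε α K x = 1 - α / exp 1 * x ^ (1 / log ε) := by
  rw [Fcdf, if_neg (not_lt.2 hx.1), if_pos hx.2]

theorem Fcdf_eq_affine (hε : 0 < ε) (hε1 : ε < 1) (hK : 0 ≤ K) (hx : x ∈ Icc ε 1) :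
    Fcdf ε α K x = 1 - α * (1 - x) / (1 - ε) := by
  rcases hx.1.eq_or_lt with rfl | hεx
  · have := (sub_pos.2 hε1).ne'
    rw [Fcdf_eq_rpow ⟨rpow_add_one_le_self hε hε1.le hK, le_rfl⟩, rpow_one_div_log hε hε1.ne]
    field_simp
  · rw [Fcdf, if_neg (not_lt.2 ((rpow_add_one_le_self hε hε1.le hK).trans hεx.le)),
      if_neg (not_le.2 hεx), if_pos hx.2]

theorem Fcdf_rpow_add_one (hε : 0 < ε) (hε1 : ε < 1) (hK : 0 ≤ K) :
    Fcdf ε α K (ε ^ (K + 1)) = 1 - α * exp K := by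
  have h : (ε ^ (K + 1)) ^ (1 / log ε) = exp (K + 1) := by
    rw [← rpow_mul hε.le, mul_comm, rpow_mul hε.le, rpow_one_div_log hε hε1.ne, exp_one_rpow]
  rw [Fcdf_eq_rpow ⟨le_rfl, rpow_add_one_le_self hε hε1.le hK⟩, h, exp_add]
  field_simp

theorem continuousOn_Fcdf (hε : 0 < ε) (hε1 : ε < 1) (hK : 0 ≤ K) :
    ContinuousOn (Fcdf ε α K) (Icc (ε ^ (K + 1)) 1) := by
  have hm : 0 < ε ^ (K + 1) := rpow_pos_of_pos hε _
  rw [← Icc_union_Icc_eq_Icc (rpow_add_one_le_self hε hε1.le hK) hε1.le]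
  refine ContinuousOn.union_of_isClosed ?_ ?_ isClosed_Icc isClosed_Icc
  · refine ContinuousOn.congr ?_ fun x hx => Fcdf_eq_rpow hx
    exact continuousOn_const.sub (continuousOn_const.mul
      (continuousOn_id.rpow_const fun x hx => Or.inl (hm.trans_le hx.1).ne'))
  · refine ContinuousOn.congr ?_ fun x hx => Fcdf_eq_affine hε hε1 hK hx
    fun_prop

theorem concaveOn_Fcdf_rpow (hε : 0 < ε) (hε1 : ε < 1) (hα : 0 < α) :
    ConcaveOn ℝ (Icc (ε ^ (K + 1)) ε) (Fcdf ε α K) := by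
  have hr : 1 / log ε ≤ 0 := one_div_nonpos.2 (log_neg hε hε1).le
  have hsub : Icc (ε ^ (K + 1)) ε ⊆ Ioi 0 := fun x hx => (rpow_pos_of_pos hε _).trans_le hx.1
  have := (((convexOn_rpow_of_nonpos hr).subset hsub (convex_Icc _ _)).smul
    (by positivity : 0 ≤ α / exp 1)).neg.add_const 1
  refine this.congr fun x hx => ?_
  simp [Fcdf_eq_rpow hx]
  ring

theorem concaveOn_Fcdf_affine (hε : 0 < ε) (hε1 : ε < 1) (hK : 0 ≤ K) :
    ConcaveOn ℝ (Icc ε 1) (Fcdf ε α K) := by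
  have h1ε := (sub_pos.2 hε1).ne'
  refine ((LinearMap.concaveOn ((α / (1 - ε)) • LinearMap.id) (convex_Icc ε 1)).add_const
    (1 - α / (1 - ε))).congr fun x hx => ?_
  rw [Fcdf_eq_affine hε hε1 hK hx]
  show α / (1 - ε) * x + (1 - α / (1 - ε)) = _
  field_simp
  ring

/- The left slope of `Fcdf` at `ε` is at least `-α / (ε * log ε)`, which dominates the slope
`α / (1 - ε)` of the affine piece because `-ε * log ε ≤ 1 - ε`. -/
theorem slope_Fcdf_affine_le_slope_Fcdf_rpow (hε : 0 < ε) (hε1 : ε < 1) (hα : 0 < α)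
    (hK : 0 ≤ K) {y : ℝ} (hx : x ∈ Ico (ε ^ (K + 1)) ε) (hy : y ∈ Ioc ε 1) :
    (Fcdf ε α K y - Fcdf ε α K ε) / (y - ε) ≤ (Fcdf ε α K ε - Fcdf ε α K x) / (ε - x) := by
  set r := 1 / log ε
  have hlog : log ε < 0 := log_neg hε hε1
  have h1ε : 0 < 1 - ε := sub_pos.2 hε1
  have hm := rpow_add_one_le_self hε hε1.le hK
  have hx0 : 0 < x := (rpow_pos_of_pos hε _).trans_le hx.1
  have htan : slope (fun t => t ^ r) x ε ≤ r * (exp 1 / ε) := by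
    have hd := hasDerivAt_rpow_const (p := r) (Or.inl hε.ne')
    rw [rpow_sub_one hε.ne', rpow_one_div_log hε hε1.ne] at hd
    exact (convexOn_rpow_of_nonpos (one_div_nonpos.2 hlog.le)).slope_le_of_hasDerivAt
      (show x ∈ Ioi 0 from hx0) (show ε ∈ Ioi 0 from hε) hx.2 hd
  have hεlog : -(ε * log ε) ≤ 1 - ε := by
    nlinarith [one_sub_inv_le_log_of_pos hε, mul_inv_cancel₀ hε.ne']
  calc (Fcdf ε α K y - Fcdf ε α K ε) / (y - ε) = α * (1 / (1 - ε)) := by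
        rw [Fcdf_eq_affine hε hε1 hK ⟨hy.1.le, hy.2⟩,
          Fcdf_eq_affine hε hε1 hK ⟨le_rfl, hε1.le⟩]
        field_simp [(sub_pos.2 hy.1).ne']
        ring
    _ ≤ α * (1 / -(ε * log ε)) :=
        mul_le_mul_of_nonneg_left (one_div_le_one_div_of_le (by nlinarith) hεlog) hα.le
    _ = α / exp 1 * -(r * (exp 1 / ε)) := by
        simp only [r]
        field_simp
    _ ≤ α / exp 1 * -slope (fun t => t ^ r) x ε := by gcongr
    _ = (Fcdf ε α K ε - Fcdf ε α K x) / (ε - x) := by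
        rw [slope_def_field, Fcdf_eq_rpow ⟨hm, le_rfl⟩, Fcdf_eq_rpow ⟨hx.1, hx.2.le⟩]
        ring

theorem concaveCDFOn_Fcdf (hε : 0 < ε) (hε1 : ε < 1) (hα : 0 < α) (hK : 0 ≤ K)
    (hKα : K ≤ log (1 / α)) : ConcaveCDFOn (Fcdf ε α K) (ε ^ (K + 1)) where
  eq_zero_of_lt _ := Fcdf_of_lt
  nonneg_left := by
    have := (le_log_iff_exp_le (by positivity)).1 hKα
    rw [Fcdf_rpow_add_one hε hε1 hK, sub_nonneg]
    rw [le_div_iff₀ hα] at this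
    linarith
  one_le := by simp [Fcdf_eq_affine hε hε1 hK ⟨hε1.le, le_rfl⟩]
  continuousOn := continuousOn_Fcdf hε hε1 hK
  concaveOn := (concaveOn_Fcdf_rpow hε hε1 hα).union_Icc (concaveOn_Fcdf_affine hε hε1 hK)
    fun _ hx _ hy => slope_Fcdf_affine_le_slope_Fcdf_rpow hε hε1 hα hK hx hy

end Fcdf

theorem stmt15_general (ε α K : ℝ) (hε : 0 < ε) (hε2 : ε ≤ 1 / 2)
    (hα : 0 < α) (hK : 0 ≤ K) (hK2 : K ≤ Real.log (1 / α))
    (D : Measure ℝ) [IsProbabilityMeasure D]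
    (hcdf : ∀ x : ℝ, D (Set.Iic x) = ENNReal.ofReal (Fcdf ε α K x))
    (c : ℝ) (hc : c ∈ Set.Icc (0:ℝ) 1) :
    (sInf {v : ℝ | ∃ p q : ℝ, 0 ≤ p ∧ p ≤ q ∧ q ≤ 1 ∧ v = q - p ∧
        ENNReal.ofReal c ≤ D (Set.Icc p q)}
      = Finv ε α K c - ε ^ (K + 1)) ∧
    ConvexOn ℝ (Set.Icc (0:ℝ) 1) (fun c' => Finv ε α K c' - ε ^ (K + 1)) ∧
    (∀ (Ω : Type) [MeasurableSpace Ω] (P : Measure Ω), IsProbabilityMeasure P →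
      ∀ lo hi : Ω → ℝ, Measurable lo → Measurable hi →
        (∀ ω, 0 ≤ lo ω ∧ lo ω ≤ hi ω ∧ hi ω ≤ 1) →
        Measurable (fun ω => (D (Set.Icc (lo ω) (hi ω))).toReal) →
        c ≤ ∫ ω, (D (Set.Icc (lo ω) (hi ω))).toReal ∂P →
        Finv ε α K c - ε ^ (K + 1) ≤ ∫ ω, (hi ω - lo ω) ∂P) := by
  have hF := concaveCDFOn_Fcdf hε (hε2.trans_lt (by norm_num)) hα hK hK2
  have hm : 0 ≤ ε ^ (K + 1) := (Real.rpow_pos_of_pos hε _).le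
  rw [Finv_eq_quantile]
  have hconv : ConvexOn ℝ (Icc 0 1)
      fun c' => quantile (Fcdf ε α K) (ε ^ (K + 1)) c' - ε ^ (K + 1) :=
    (hF.convexOn_quantile.subset Icc_subset_Iic_self (convex_Icc 0 1)).sub
      (concaveOn_const _ (convex_Icc 0 1))
  refine ⟨(hF.isLeast_length hcdf hm hc.2).csInf_eq, hconv, ?_⟩
  intro Ω _ P _ lo hi hlo hhi hlohi hmeas hcP
  have hD : ∀ ω, (D (Icc (lo ω) (hi ω))).toReal ∈ Icc (0 : ℝ) 1 := fun ω =>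
    ⟨ENNReal.toReal_nonneg,
      ENNReal.toReal_le_of_le_ofReal zero_le_one (by simpa using prob_le_one)⟩
  refine hconv.le_integral_of_comp_le (fun u hu => ?_) ?_ ?_ hD (fun ω => ?_) hc hcP
  · simpa [quantile] using (hF.isLeast_quantile hu.2).1.1
  · refine .of_bound hmeas.aestronglyMeasurable 1 (ae_of_all _ fun ω => ?_)
    rw [Real.norm_of_nonneg (hD ω).1]
    exact (hD ω).2
  · refine .of_bound (hhi.sub hlo).aestronglyMeasurable 1 (ae_of_all _ fun ω => ?_)
    obtain ⟨h0, h1, h2⟩ := hlohi ω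
    rw [Real.norm_of_nonneg (sub_nonneg.2 h1)]
    linarith
  · obtain ⟨h0, h1, h2⟩ := hlohi ω
    exact (hF.isLeast_length hcdf hm (hD ω).2).2
      ⟨lo ω, hi ω, h0, h1, h2, rfl, ENNReal.ofReal_toReal_le⟩

/-- **The volume-optimality function of `D^{(K)}`** (Fact 5.2 and the surrounding
computation in the proof of Theorem 5.1).  Let `0 < ε ≤ 1/2`, `0 < α ≤ 1`,
`0 ≤ K ≤ ln(1/α)`, and let `D` be the probability distribution on `[0,1]` with c.d.f.
`Fcdf ε α K`.  Then for every coverage level `c ∈ [0,1]`: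
(i) the minimum volume of a closed interval `I ⊆ [0,1]` with `D(I) ≥ c` equals
`v*(c) = F⁻¹(c) - ε^{K+1}`; (ii) `v*` is convex on `[0,1]`; and (iii) every random
closed interval `[lo, hi] ⊆ [0,1]` with `E[D([lo,hi])] ≥ c` has
`E[hi - lo] ≥ F⁻¹(c) - ε^{K+1}`. -/
theorem stmt15 (ε α K : ℝ) (hε : 0 < ε) (hε2 : ε ≤ 1 / 2)
    (hα : 0 < α) (hα1 : α ≤ 1) (hK : 0 ≤ K) (hK2 : K ≤ Real.log (1 / α))
    (D : Measure ℝ) [IsProbabilityMeasure D]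
    (hcdf : ∀ x : ℝ, D (Set.Iic x) = ENNReal.ofReal (Fcdf ε α K x))
    (c : ℝ) (hc : c ∈ Set.Icc (0:ℝ) 1) :
    (sInf {v : ℝ | ∃ p q : ℝ, 0 ≤ p ∧ p ≤ q ∧ q ≤ 1 ∧ v = q - p ∧
        ENNReal.ofReal c ≤ D (Set.Icc p q)}
      = Finv ε α K c - ε ^ (K + 1)) ∧
    ConvexOn ℝ (Set.Icc (0:ℝ) 1) (fun c' => Finv ε α K c' - ε ^ (K + 1)) ∧
    (∀ (Ω : Type) [MeasurableSpace Ω] (P : Measure Ω), IsProbabilityMeasure P →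
      ∀ lo hi : Ω → ℝ, Measurable lo → Measurable hi →
        (∀ ω, 0 ≤ lo ω ∧ lo ω ≤ hi ω ∧ hi ω ≤ 1) →
        Measurable (fun ω => (D (Set.Icc (lo ω) (hi ω))).toReal) →
        c ≤ ∫ ω, (D (Set.Icc (lo ω) (hi ω))).toReal ∂P →
        Finv ε α K c - ε ^ (K + 1) ≤ ∫ ω, (hi ω - lo ω) ∂P) :=
  stmt15_general ε α K hε hε2 hα hK hK2 D hcdf c hc
end
end
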